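/- The 6-dimensional algebra D = H_α ⊕ H_α* with multiplication given by e1 ∗ e3 = e2, e3 ∗ e1 = α e2, e2* ∗ e2* = −(1+α)a e3*, e2* ∗ e1 = e3*, e1 ∗ e2* = α e3*, e3 ∗ e2* = e1* − (α+1)a e2, e2* ∗ e3 = α e1* − (α+1)a e2 (all other basis products zero) is an associative algebra, and the bilinear form B(x + a*, y + b*) = ⟨x,b*⟩ + ⟨a*,y⟩ is nondegenerate; hence (D, B) is a Frobenius algebra. -/

import Mathlib

open Finset

/-- An element of the double `D = H_α ⊕ H_α*`: a pair of coordinate vectors,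
the first w.r.t. the basis `e₁,e₂,e₃` of `H_α`, the second w.r.t. the dual
basis `e₁*,e₂*,e₃*` of `H_α*`. -/
abbrev Dbl := (Fin 3 → ℂ) × (Fin 3 → ℂ)

/-- The product on the double `D = H_α ⊕ H_α*`, determined bilinearly by:
`e₁ ∗ e₃ = e₂`, `e₃ ∗ e₁ = α e₂`, `e₂* ∗ e₂* = −(1+α) a e₃*`,
`e₂* ∗ e₁ = e₃*`, `e₁ ∗ e₂* = α e₃*`, `e₃ ∗ e₂* = e₁* − (α+1) a e₂`,
`e₂* ∗ e₃ = α e₁* − (α+1) a e₂`, all other basis products zero. -/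
def mulD (α a : ℂ) (p q : Dbl) : Dbl :=
  (fun k => if k = 1 then
      p.1 0 * q.1 2 + α * (p.1 2 * q.1 0)
        - (α + 1) * a * (p.1 2 * q.2 1 + p.2 1 * q.1 2)
    else 0,
   fun k =>
    if k = 0 then p.1 2 * q.2 1 + α * (p.2 1 * q.1 2)
    else if k = 2 then
      -(1 + α) * a * (p.2 1 * q.2 1) + p.2 1 * q.1 0 + α * (p.1 0 * q.2 1)
    else 0)

/-- The natural symmetric bilinear form on `D = H_α ⊕ H_α*`:
`B(x + a*, y + b*) = ⟨x, b*⟩ + ⟨a*, y⟩`. -/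
noncomputable def formB (p q : Dbl) : ℂ := (∑ k, p.1 k * q.2 k) + (∑ k, p.2 k * q.1 k)

/- Products lie in the span of `e₂, e₁*, e₃*`, and these basis vectors multiply every element
to zero from either side; so the algebra satisfies `D³ = 0`, and associativity is `0 = 0`. -/
theorem mulD_mulD_left_eq_zero (α a : ℂ) (u v w : Dbl) : mulD α a (mulD α a u v) w = 0 := by
  refine Prod.ext (funext fun k => ?_) (funext fun k => ?_) <;> fin_cases k <;> simp [mulD]

theorem mulD_mulD_right_eq_zero (α a : ℂ) (u v w : Dbl) : mulD α a u (mulD α a v w) = 0 := by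
  refine Prod.ext (funext fun k => ?_) (funext fun k => ?_) <;> fin_cases k <;> simp [mulD]

theorem mulD_assoc (α a : ℂ) (u v w : Dbl) :
    mulD α a (mulD α a u v) w = mulD α a u (mulD α a v w) := by
  rw [mulD_mulD_left_eq_zero, mulD_mulD_right_eq_zero]

theorem formB_zero_single (p : Dbl) (k : Fin 3) : formB p (0, Pi.single k 1) = p.1 k := by
  simp [formB, Pi.single_apply]

theorem formB_single_zero (p : Dbl) (k : Fin 3) : formB p (Pi.single k 1, 0) = p.2 k := by
  simp [formB, Pi.single_apply]

theorem formB_nondegenerate (p : Dbl) (hp : ∀ q : Dbl, formB p q = 0) : p = 0 :=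
  Prod.ext (funext fun k => (formB_zero_single p k).symm.trans (hp _))
    (funext fun k => (formB_single_zero p k).symm.trans (hp _))

/-- The double `D = H_α ⊕ H_α*` is an associative algebra and the natural
symmetric bilinear form `B` is nondegenerate; hence `(D, B)` is a Frobenius
algebra. -/
theorem double_is_Frobenius (α a : ℂ) :
    (∀ u v w : Dbl, mulD α a (mulD α a u v) w = mulD α a u (mulD α a v w)) ∧
    (∀ p : Dbl, (∀ q : Dbl, formB p q = 0) → p = 0) :=
  ⟨mulD_assoc α a, formB_nondegenerate⟩
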